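/- Any global optimal solution p* of min_{p ∈ Ω_{k,p⁰,δ}} Q(p) is a first-order stationary point: p* belongs to the projection of p* - (1/L)∇Q(p*) onto Ω_{k,p⁰,δ}, for any L > λ₁. -/

import Mathlib

/-!
Since every eigenvalue of `S` is below `L`, `Q (p + d) ≤ Q p + ⟪∇Q p, d⟫ + (L/2)‖d‖²`, and the right-hand
side minus `Q p` equals `(L/2)(‖p + d - (p - ∇Q p / L)‖² - ‖∇Q p / L‖²)`. At a global minimiser `p*` the
left-hand side is at least `Q p*` for every `p* + d ∈ Ω`, so `p*` is a nearest point of `Ω` to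
`p* - ∇Q p* / L`.
-/

open Matrix
open scoped MatrixOrder

theorem Matrix.IsHermitian.dotProduct_mulVec_le_of_eigenvalues_le {ι : Type*} [Fintype ι]
    [DecidableEq ι] {S : Matrix ι ι ℝ} (hS : S.IsHermitian) {c : ℝ}
    (hc : ∀ i, hS.eigenvalues i ≤ c) (x : ι → ℝ) : x ⬝ᵥ S *ᵥ x ≤ c * (x ⬝ᵥ x) := by
  have hle : S ≤ algebraMap ℝ _ c := le_algebraMap_of_spectrum_le (by
    rw [hS.spectrum_real_eq_range_eigenvalues]
    rintro _ ⟨i, rfl⟩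
    exact hc i)
  simpa [sub_mulVec, dotProduct_sub, Algebra.algebraMap_eq_smul_one, smul_mulVec, dotProduct_smul]
    using (le_iff.mp hle).dotProduct_mulVec_nonneg x

theorem Matrix.IsHermitian.quadratic_add {ι : Type*} [Fintype ι] {S : Matrix ι ι ℝ}
    (hS : S.IsHermitian) (f p d : ι → ℝ) :
    1 / 2 * ((p + d) ⬝ᵥ S *ᵥ (p + d)) - f ⬝ᵥ (p + d) =
      1 / 2 * (p ⬝ᵥ S *ᵥ p) - f ⬝ᵥ p + (S *ᵥ p - f) ⬝ᵥ d + 1 / 2 * (d ⬝ᵥ S *ᵥ d) := by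
  have hsymm : p ⬝ᵥ S *ᵥ d = d ⬝ᵥ S *ᵥ p := by
    rw [dotProduct_mulVec, ← mulVec_transpose, ← conjTranspose_eq_transpose_of_trivial, hS.eq,
      dotProduct_comm]
  simp only [mulVec_add, dotProduct_add, add_dotProduct, sub_dotProduct, hsymm,
    dotProduct_comm (S *ᵥ p) d]
  ring

theorem sum_sq_sub_le_sum_sq_sub {ι : Type*} [Fintype ι] {L : ℝ} (hL : 0 < L) (g p q : ι → ℝ)
    (h : 0 ≤ g ⬝ᵥ (q - p) + L / 2 * ((q - p) ⬝ᵥ (q - p))) :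
    ∑ i, (p i - (p i - 1 / L * g i)) ^ 2 ≤ ∑ i, (q i - (p i - 1 / L * g i)) ^ 2 := by
  have hdiff : ∑ i, (q i - (p i - 1 / L * g i)) ^ 2 - ∑ i, (p i - (p i - 1 / L * g i)) ^ 2 =
      2 / L * (g ⬝ᵥ (q - p) + L / 2 * ((q - p) ⬝ᵥ (q - p))) := by
    simp only [dotProduct, Finset.mul_sum, ← Finset.sum_add_distrib, ← Finset.sum_sub_distrib,
      Pi.sub_apply]
    refine Finset.sum_congr rfl fun i _ => ?_
    field_simp
    ring
  rw [← sub_nonneg, hdiff]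
  exact mul_nonneg (by positivity) h

theorem global_optimum_is_stationary_general {n : ℕ}
    (S : Matrix (Fin n) (Fin n) ℝ) (f : Fin n → ℝ) (hPD : S.PosDef)
    (Q : (Fin n → ℝ) → ℝ)
    (hQ : ∀ p, Q p = (1/2) * (p ⬝ᵥ S.mulVec p) - f ⬝ᵥ p)
    (lam1 : ℝ) (hlam1 : IsGreatest (Set.range hPD.1.eigenvalues) lam1)
    (Ω : Set (Fin n → ℝ))
    (pstar : Fin n → ℝ) (hopt : ∀ p ∈ Ω, Q pstar ≤ Q p)
    (L : ℝ) (hL : lam1 < L) :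
    ∀ p'' ∈ Ω,
      ∑ i, (pstar i - (pstar i - (1/L) * (S.mulVec pstar - f) i)) ^ 2 ≤
        ∑ i, (p'' i - (pstar i - (1/L) * (S.mulVec pstar - f) i)) ^ 2 := by
  intro q hq
  obtain ⟨i, hi⟩ := hlam1.1
  have hL0 : 0 < L := (hPD.eigenvalues_pos i).trans (hi ▸ hL)
  have heig_le : ∀ j, hPD.1.eigenvalues j ≤ L := fun j => (hlam1.2 ⟨j, rfl⟩).trans hL.le
  have hupper := hPD.1.dotProduct_mulVec_le_of_eigenvalues_le heig_le (q - pstar)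
  have hexpand := hPD.1.quadratic_add f pstar (q - pstar)
  rw [add_sub_cancel] at hexpand
  have hmin := hopt q hq
  rw [hQ, hQ] at hmin
  apply sum_sq_sub_le_sum_sq_sub hL0
  linarith

theorem global_optimum_is_stationary {n k : ℕ}
    (S : Matrix (Fin n) (Fin n) ℝ) (f p0 δ : Fin n → ℝ) (hPD : S.PosDef)
    (hδ : ∀ i, 0 < δ i)
    (Q : (Fin n → ℝ) → ℝ)
    (hQ : ∀ p, Q p = (1/2) * (p ⬝ᵥ S.mulVec p) - f ⬝ᵥ p)
    (lam1 : ℝ) (hlam1 : IsGreatest (Set.range hPD.1.eigenvalues) lam1)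
    (Ω : Set (Fin n → ℝ))
    (hΩ : Ω = {p | {i | p i ≠ p0 i}.ncard ≤ k ∧
      ∀ i, p i = p0 i ∨ p0 i + δ i ≤ p i ∨ p i ≤ p0 i - δ i})
    (pstar : Fin n → ℝ) (hfeas : pstar ∈ Ω) (hopt : ∀ p ∈ Ω, Q pstar ≤ Q p)
    (L : ℝ) (hL : lam1 < L) :
    ∀ p'' ∈ Ω,
      ∑ i, (pstar i - (pstar i - (1/L) * (S.mulVec pstar - f) i)) ^ 2 ≤
        ∑ i, (p'' i - (pstar i - (1/L) * (S.mulVec pstar - f) i)) ^ 2 :=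
  global_optimum_is_stationary_general S f hPD Q hQ lam1 hlam1 Ω pstar hopt L hL
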